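/- Let V be a finite-dimensional complex inner product space and let 𝔞 be a finite-dimensional real vector space of pairwise commuting self-adjoint endomorphisms of V. Define μ_𝔞 : ℙ(V) → 𝔞* (the real dual of 𝔞) by μ_𝔞([v])(β) = Re⟨βv, v⟩/‖v‖². Let M ⊆ ℙ(V) be a closed subset which is full (the representatives of its points span V) and invariant under [v] ↦ [exp(β)v] for every β ∈ 𝔞. If μ_𝔞(M) is convex, then μ_𝔞(M) = μ_𝔞(ℙ(V)). -/

import Mathlib

/-!
Diagonalise the commuting family `𝔞` simultaneously in an orthonormal basis `e` of `V`; the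
weights `w k ∈ 𝔞*` are real because `𝔞` is self-adjoint. Then
`μ_𝔞([v]) = ∑ k, (|v_k|² / ‖v‖²) • w k`, so `μ_𝔞(ℙ(V))` is the convex hull of the weights. By
Krein–Milman and Hahn–Banach this polytope is the convex hull of the weights `α` that some `β ∈ 𝔞`
strictly exposes, so by convexity it suffices to put each such `α` in `μ_𝔞(M)`. Fullness gives
`[v] ∈ M` with a nonzero coefficient on an `α`-weight vector of `e`. As `t → ∞`,
`e^{-t α(β)} exp(tβ) v` tends to the part `u ≠ 0` of `v` along the basis vectors on which `β`
takes its maximal value `α(β)`, all of which have weight `α`; since `M` is closed and invariant,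
`[u] ∈ M`, and `μ_𝔞([u]) = α`.
-/

open scoped LinearAlgebra.Projectivization

noncomputable instance stmt10.instTop (V : Type*) [NormedAddCommGroup V]
    [InnerProductSpace ℂ V] : TopologicalSpace (ℙ ℂ V) :=
  instTopologicalSpaceQuotient

lemma stmt10.exp_apply_ne_zero {V : Type*} [NormedAddCommGroup V] [InnerProductSpace ℂ V]
    [FiniteDimensional ℂ V] (A : V →L[ℂ] V) (v : V) (hv : v ≠ 0) :
    NormedSpace.exp A v ≠ 0 := by
  letI : NormedAlgebra ℚ (V →L[ℂ] V) := NormedAlgebra.restrictScalars ℚ ℝ (V →L[ℂ] V)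
  intro h
  have h1 : NormedSpace.exp (-A) * NormedSpace.exp A = 1 := by
    rw [← NormedSpace.exp_add_of_commute (Commute.neg_left (Commute.refl A)),
      neg_add_cancel, NormedSpace.exp_zero]
  have h2 : NormedSpace.exp (-A) (NormedSpace.exp A v) = v := by
    have := congrArg (fun f : V →L[ℂ] V => f v) h1
    simpa using this
  rw [h] at h2
  simp at h2
  exact hv h2.symm

/-- The gradient map `μ_𝔞 : ℙ(V) → 𝔞*`, `μ_𝔞([v])(β) = Re⟨βv, v⟩/‖v‖²` (computed on a
representative; the value does not depend on the choice of representative). -/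
noncomputable def stmt10.mu {V : Type*} [NormedAddCommGroup V] [InnerProductSpace ℂ V]
    (𝔞 : Submodule ℝ (V →L[ℂ] V)) (p : ℙ ℂ V) : 𝔞 → ℝ :=
  fun β => (inner ℂ ((β : V →L[ℂ] V) p.rep) p.rep : ℂ).re / ‖p.rep‖ ^ 2

open Filter Module Set Topology

theorem convexHull_subset_of_forall_exposed {E : Type*} [AddCommGroup E] [Module ℝ E]
    [TopologicalSpace E] [T2Space E] [IsTopologicalAddGroup E] [ContinuousSMul ℝ E]
    [LocallyConvexSpace ℝ E] {s B : Set E} (hs : s.Finite) (hB : Convex ℝ B)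
    (h : ∀ x ∈ s, ∀ f : StrongDual ℝ E, (∀ y ∈ s, y ≠ x → f y < f x) → x ∈ B) :
    convexHull ℝ s ⊆ B := by
  have hext : (convexHull ℝ s).extremePoints ℝ ⊆ B := by
    intro x hx
    have hxs : x ∈ s := extremePoints_convexHull_subset hx
    have hx_notMem : x ∉ convexHull ℝ (s \ {x}) := fun hmem =>
      ((convex_convexHull ℝ s).mem_extremePoints_iff_mem_sdiff_convexHull_sdiff.mp hx).2 <|
        convexHull_mono (sdiff_subset_sdiff_left (subset_convexHull ℝ s)) hmem
    obtain ⟨f, u, hfu, hux⟩ := geometric_hahn_banach_closed_point (convex_convexHull ℝ _)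
      ((hs.sdiff.isCompact_convexHull ℝ).isClosed) hx_notMem
    exact h x hxs f fun y hy hyx => (hfu y (subset_convexHull ℝ _ ⟨hy, hyx⟩)).trans hux
  have hcompact : IsCompact (convexHull ℝ s) := hs.isCompact_convexHull ℝ
  have hfin : ((convexHull ℝ s).extremePoints ℝ).Finite :=
    hs.subset extremePoints_convexHull_subset
  calc convexHull ℝ s
      = closure (convexHull ℝ ((convexHull ℝ s).extremePoints ℝ)) :=
        (closure_convexHull_extremePoints hcompact (convex_convexHull ℝ s)).symm
    _ = convexHull ℝ ((convexHull ℝ s).extremePoints ℝ) :=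
        (hfin.isCompact_convexHull ℝ).isClosed.closure_eq
    _ ⊆ B := convexHull_min hext hB

theorem Module.Dual.convexHull_subset_of_forall_exposed {D : Type*} [AddCommGroup D]
    [Module ℝ D] [FiniteDimensional ℝ D] {s B : Set (Module.Dual ℝ D)} (hs : s.Finite)
    (hB : Convex ℝ B) (h : ∀ x ∈ s, ∀ β : D, (∀ y ∈ s, y ≠ x → y β < x β) → x ∈ B) :
    convexHull ℝ s ⊆ B := by
  -- Coordinates give `Dual ℝ D` a topology; functionals on it are evaluations at points of `D`.
  let φ := (Module.finBasis ℝ (Module.Dual ℝ D)).equivFun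
  have himage : convexHull ℝ (φ '' s) ⊆ φ '' B := by
    refine _root_.convexHull_subset_of_forall_exposed (hs.image φ)
      (hB.linear_image φ.toLinearMap) ?_
    rintro _ ⟨x, hx, rfl⟩ f hf
    obtain ⟨β, hβ⟩ := (Module.evalEquiv ℝ D).surjective ((f : _ →ₗ[ℝ] ℝ) ∘ₗ φ.toLinearMap)
    refine mem_image_of_mem φ (h x hx β fun y hy hyx => ?_)
    have hfy : ∀ z : Module.Dual ℝ D, z β = f (φ z) := fun z => LinearMap.congr_fun hβ z
    rw [hfy, hfy]
    exact hf (φ y) (mem_image_of_mem φ hy) (φ.injective.ne hyx)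
  intro x hx
  have : φ x ∈ φ '' B := himage (φ.toLinearMap.image_convexHull s ▸ mem_image_of_mem φ hx)
  rwa [φ.injective.mem_set_image] at this

theorem convexHull_range_eq_image_stdSimplex {ι E : Type*} [Fintype ι] [AddCommGroup E]
    [Module ℝ E] (w : ι → E) :
    convexHull ℝ (Set.range w) = (fun t => ∑ k, t k • w k) '' stdSimplex ℝ ι := by
  classical
  have hw : w = Fintype.linearCombination ℝ w ∘ fun k => Pi.single k 1 := by
    ext k
    simp [Fintype.linearCombination_apply_single]
  rw [← convexHull_rangle_single_eq_stdSimplex, ← funext (Fintype.linearCombination_apply ℝ w),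
    LinearMap.image_convexHull, ← Set.range_comp, ← hw]

theorem LinearMap.IsSymmetric.exists_orthonormalBasis_apply_eq_smul_of_commute
    {𝕜 E ι : Type*} [RCLike 𝕜] [NormedAddCommGroup E] [InnerProductSpace 𝕜 E]
    [FiniteDimensional 𝕜 E] {T : ι → E →ₗ[𝕜] E} (hT : ∀ i, (T i).IsSymmetric)
    (hC : Pairwise (Function.onFun Commute T)) :
    ∃ (e : OrthonormalBasis (Fin (finrank 𝕜 E)) 𝕜 E) (χ : Fin (finrank 𝕜 E) → ι → 𝕜),
      ∀ j i, T i (e j) = χ j i • e j := by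
  classical
  let W : (ι → 𝕜) → Submodule 𝕜 E := fun χ => ⨅ i, End.eigenspace (T i) (χ i)
  have horth : OrthogonalFamily 𝕜 (fun χ => W χ) (fun χ => (W χ).subtypeₗᵢ) :=
    orthogonalFamily_iInf_eigenspaces hT
  let S := {χ // W χ ≠ ⊥}
  have : Fintype S := (Submodule.finite_ne_bot_of_iSupIndep horth.independent).fintype
  have horthS : OrthogonalFamily 𝕜 (fun χ : S => W χ) (fun χ => (W χ).subtypeₗᵢ) :=
    horth.comp Subtype.val_injective
  have hint : DirectSum.IsInternal (fun χ : S => W χ) := by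
    rw [horthS.isInternal_iff, iSup_ne_bot_subtype W, iSup_iInf_eq_top_of_commute hT hC,
      Submodule.top_orthogonal_eq_bot]
  refine ⟨hint.subordinateOrthonormalBasis rfl horthS,
    fun j => (hint.subordinateOrthonormalBasisIndex rfl j horthS).1, fun j i => ?_⟩
  exact End.mem_eigenspace_iff.mp <|
    Submodule.mem_iInf _ |>.mp (hint.subordinateOrthonormalBasis_subordinate rfl j horthS) i

theorem OrthonormalBasis.sum_sq_norm_repr {ι 𝕜 E : Type*} [Fintype ι] [RCLike 𝕜]
    [NormedAddCommGroup E] [InnerProductSpace 𝕜 E] (e : OrthonormalBasis ι 𝕜 E) (v : E) :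
    ∑ k, ‖e.repr v k‖ ^ 2 = ‖v‖ ^ 2 := by
  simp only [e.repr_apply_apply, e.sum_sq_norm_inner_right]

theorem OrthonormalBasis.exists_sq_norm_repr_eq {ι 𝕜 E : Type*} [Fintype ι] [RCLike 𝕜]
    [NormedAddCommGroup E] [InnerProductSpace 𝕜 E] (e : OrthonormalBasis ι 𝕜 E) {t : ι → ℝ}
    (ht : t ∈ stdSimplex ℝ ι) : ∃ v : E, ‖v‖ = 1 ∧ ∀ k, ‖e.repr v k‖ ^ 2 = t k := by
  let v := e.repr.symm (WithLp.toLp 2 fun k => (Real.sqrt (t k) : 𝕜))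
  have hv : ∀ k, ‖e.repr v k‖ ^ 2 = t k := fun k => by
    simp [v, Real.sq_sqrt (ht.1 k)]
  refine ⟨v, ?_, hv⟩
  rw [← pow_eq_one_iff_of_nonneg (norm_nonneg v) two_ne_zero, ← e.sum_sq_norm_repr,
    Finset.sum_congr rfl fun k _ => hv k, ht.2]

theorem Submodule.exists_inner_ne_zero_of_span_eq_top {𝕜 E : Type*} [RCLike 𝕜]
    [NormedAddCommGroup E] [InnerProductSpace 𝕜 E] {S : Set E} (hS : span 𝕜 S = ⊤) {x : E}
    (hx : x ≠ 0) : ∃ v ∈ S, inner 𝕜 x v ≠ 0 := by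
  by_contra! h
  have hS_le : S ⊆ (𝕜 ∙ x)ᗮ := fun v hv => (mem_orthogonal_singleton_iff_inner_right).2 (h v hv)
  have hx' : x ∈ (𝕜 ∙ x)ᗮ := (hS ▸ span_le.2 hS_le : ⊤ ≤ (𝕜 ∙ x)ᗮ) mem_top
  exact hx (inner_self_eq_zero.mp ((mem_orthogonal_singleton_iff_inner_right).1 hx'))

theorem Projectivization.mk_smul_eq {K V : Type*} [DivisionRing K] [AddCommGroup V]
    [Module K V] {a : K} (ha : a ≠ 0) {v : V} (hv : v ≠ 0) :
    mk K (a • v) (smul_ne_zero ha hv) = mk K v hv :=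
  (mk_eq_mk_iff' K _ _ _ _).2 ⟨a, rfl⟩

theorem ContinuousLinearMap.exp_apply_of_apply_eq_smul {𝕜 E : Type*} [RCLike 𝕜]
    [NormedAddCommGroup E] [NormedSpace 𝕜 E] [CompleteSpace E] {B : E →L[𝕜] E} {c : 𝕜} {x : E}
    (h : B x = c • x) : NormedSpace.exp B x = NormedSpace.exp c • x := by
  have hpow : ∀ n : ℕ, (B ^ n) x = c ^ n • x := by
    intro n
    induction n with
    | zero => simp
    | succ n ih => rw [pow_succ', mul_apply_eq_comp, ih, map_smul, h, smul_smul, pow_succ]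
  have hB := (NormedSpace.exp_series_hasSum_exp' (𝕂 := 𝕜) B).mapL (apply 𝕜 E x)
  have hc := (NormedSpace.exp_series_hasSum_exp' (𝕂 := 𝕜) c).smul_const x
  refine hB.unique ?_
  simpa only [apply_apply, smul_apply, hpow, smul_smul, smul_eq_mul] using hc

theorem tendsto_sum_exp_mul_smul {ι E : Type*} [Fintype ι] [AddCommGroup E] [Module ℝ E]
    [TopologicalSpace E] [IsTopologicalAddGroup E] [ContinuousSMul ℝ E] {a : ι → ℝ}
    (ha : ∀ k, a k ≤ 0) (x : ι → E) :
    Tendsto (fun t => ∑ k, Real.exp (t * a k) • x k) atTop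
      (𝓝 (∑ k with a k = 0, x k)) := by
  rw [Finset.sum_filter]
  refine tendsto_finsetSum _ fun k _ => ?_
  rcases (ha k).eq_or_lt with hk | hk
  · simpa [hk] using tendsto_const_nhds
  · rw [if_neg hk.ne]
    simpa using ((Real.tendsto_exp_atBot.comp
      (tendsto_id.atTop_mul_const_of_neg hk)).smul_const (x k))

namespace stmt10

open Projectivization

variable {V : Type*} [NormedAddCommGroup V] [InnerProductSpace ℂ V]
  (𝔞 : Submodule ℝ (V →L[ℂ] V))

noncomputable def expectation (v : V) : Module.Dual ℝ 𝔞 where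
  toFun β := (inner ℂ ((β : V →L[ℂ] V) v) v).re
  map_add' β γ := by simp
  map_smul' r β := by simp [← Complex.coe_smul, mul_comm]

theorem expectation_smul (a : ℂ) (v : V) :
    expectation 𝔞 (a • v) = ‖a‖ ^ 2 • expectation 𝔞 v := by
  ext β
  simp only [expectation, LinearMap.coe_mk, AddHom.coe_mk, map_smul, inner_smul_left,
    inner_smul_right, ← mul_assoc, Complex.mul_conj', LinearMap.smul_apply, smul_eq_mul]
  exact_mod_cast Complex.re_ofReal_mul _ _

theorem mu_mk_apply (v : V) (hv : v ≠ 0) (β : 𝔞) :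
    mu 𝔞 (mk ℂ v hv) β = expectation 𝔞 v β / ‖v‖ ^ 2 := by
  obtain ⟨a, ha⟩ := exists_smul_eq_mk_rep ℂ v hv
  have ha0 : ‖(a : ℂ)‖ ≠ 0 := norm_ne_zero_iff.2 a.ne_zero
  change expectation 𝔞 (mk ℂ v hv).rep β / _ = _
  rw [← ha, Units.smul_def, expectation_smul, norm_smul, LinearMap.smul_apply, smul_eq_mul,
    mul_pow, mul_div_mul_left _ _ (pow_ne_zero 2 ha0)]

theorem expectation_apply_of_apply_eq_smul {v : V} {β : 𝔞} {c : ℝ}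
    (h : (β : V →L[ℂ] V) v = (c : ℂ) • v) : expectation 𝔞 v β = c * ‖v‖ ^ 2 := by
  change (inner ℂ ((β : V →L[ℂ] V) v) v).re = _
  rw [h, inner_smul_left, Complex.conj_ofReal, inner_self_eq_norm_sq_to_K]
  exact_mod_cast Complex.re_ofReal_mul _ _

theorem mu_mk_of_forall_apply_eq_smul {v : V} (hv : v ≠ 0) {α : Module.Dual ℝ 𝔞}
    (h : ∀ β : 𝔞, (β : V →L[ℂ] V) v = (α β : ℂ) • v) : mu 𝔞 (mk ℂ v hv) = ⇑α := by
  ext β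
  rw [mu_mk_apply, expectation_apply_of_apply_eq_smul 𝔞 (h β),
    mul_div_cancel_right₀ _ (pow_ne_zero 2 (norm_ne_zero_iff.2 hv))]

def IsWeightBasis {ι : Type*} [Fintype ι] (e : OrthonormalBasis ι ℂ V)
    (w : ι → Module.Dual ℝ 𝔞) : Prop :=
  ∀ j (β : 𝔞), (β : V →L[ℂ] V) (e j) = (w j β : ℂ) • e j

theorem exists_isWeightBasis [FiniteDimensional ℂ V]
    (hsa : ∀ β ∈ 𝔞, IsSelfAdjoint β) (hcomm : ∀ β ∈ 𝔞, ∀ γ ∈ 𝔞, Commute β γ) :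
    ∃ (e : OrthonormalBasis (Fin (finrank ℂ V)) ℂ V) (w : Fin (finrank ℂ V) → Module.Dual ℝ 𝔞),
      IsWeightBasis 𝔞 e w := by
  have hsym (β : 𝔞) : ((β : V →L[ℂ] V) : V →ₗ[ℂ] V).IsSymmetric := (hsa β β.2).isSymmetric
  obtain ⟨e, χ, hχ⟩ := LinearMap.IsSymmetric.exists_orthonormalBasis_apply_eq_smul_of_commute
    hsym fun β γ _ => (hcomm β β.2 γ γ.2).map ContinuousLinearMap.toLinearMapRingHom
  refine ⟨e, fun j => expectation 𝔞 (e j), fun j β => ?_⟩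
  have hreal : starRingEnd ℂ (χ j β) = χ j β := (hsym β).conj_eigenvalue_eq_self
    (Module.End.hasEigenvalue_of_hasEigenvector
      ⟨Module.End.mem_eigenspace_iff.2 (hχ j β), e.orthonormal.ne_zero j⟩)
  have h : (β : V →L[ℂ] V) (e j) = ((χ j β).re : ℂ) • e j := by
    rw [Complex.conj_eq_iff_re.1 hreal]
    exact hχ j β
  rw [expectation_apply_of_apply_eq_smul 𝔞 h, e.orthonormal.1 j, one_pow, mul_one]
  exact h

theorem tendsto_mk {α : Type*} {l : Filter α} {c : α → V} {u : V} (hc : ∀ a, c a ≠ 0)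
    (hu : u ≠ 0) (h : Tendsto c l (𝓝 u)) :
    Tendsto (fun a => mk ℂ (c a) (hc a)) l (𝓝 (mk ℂ u hu)) :=
  (continuous_quotient_mk'.tendsto _).comp (tendsto_subtype_rng.2 h)

section JointEigenbasis

variable {𝔞} {ι : Type*} [Fintype ι] {e : OrthonormalBasis ι ℂ V} {w : ι → Module.Dual ℝ 𝔞}

theorem expectation_eq_sum (hw : IsWeightBasis 𝔞 e w) (v : V) :
    expectation 𝔞 v = ∑ k, ‖e.repr v k‖ ^ 2 • w k := by
  ext β
  have hβv : (β : V →L[ℂ] V) v = ∑ k, (e.repr v k * w k β) • e k := by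
    conv_lhs => rw [← e.sum_repr v]
    simp only [map_sum, map_smul, hw _, smul_smul]
  change (inner ℂ ((β : V →L[ℂ] V) v) v).re = _
  rw [hβv, sum_inner, Complex.re_sum, LinearMap.sum_apply]
  refine Finset.sum_congr rfl fun k _ => ?_
  have : inner ℂ ((e.repr v k * w k β) • e k) v = ((‖e.repr v k‖ ^ 2 * w k β : ℝ) : ℂ) := by
    rw [inner_smul_left, ← e.repr_apply_apply, map_mul, Complex.conj_ofReal, mul_right_comm,
      Complex.conj_mul']
    push_cast
    ring
  rw [this, Complex.ofReal_re, LinearMap.smul_apply, smul_eq_mul]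

theorem mu_mk_eq_sum (hw : IsWeightBasis 𝔞 e w) (v : V) (hv : v ≠ 0) :
    mu 𝔞 (mk ℂ v hv) = ⇑(∑ k, (‖e.repr v k‖ ^ 2 / ‖v‖ ^ 2) • w k) := by
  ext β
  simp [mu_mk_apply, expectation_eq_sum hw, Finset.sum_div, div_mul_eq_mul_div]

theorem range_mu_eq_image_convexHull (hw : IsWeightBasis 𝔞 e w) :
    Set.range (mu 𝔞) = DFunLike.coe '' convexHull ℝ (Set.range w) := by
  rw [convexHull_range_eq_image_stdSimplex, Set.image_image]
  apply Set.Subset.antisymm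
  · rintro _ ⟨p, rfl⟩
    induction p using Projectivization.ind with | h v hv => ?_
    refine ⟨fun k => ‖e.repr v k‖ ^ 2 / ‖v‖ ^ 2, ⟨fun k => by positivity, ?_⟩,
      (mu_mk_eq_sum hw v hv).symm⟩
    rw [← Finset.sum_div, e.sum_sq_norm_repr, div_self (by positivity)]
  · rintro _ ⟨t, ht, rfl⟩
    obtain ⟨v, hv1, hvt⟩ := e.exists_sq_norm_repr_eq ht
    have hv : v ≠ 0 := norm_ne_zero_iff.1 (hv1 ▸ one_ne_zero)
    exact ⟨mk ℂ v hv, by simp [mu_mk_eq_sum hw, hv1, hvt]⟩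

theorem exp_smul_apply_eq_sum [CompleteSpace V] (hw : IsWeightBasis 𝔞 e w) (t : ℝ) (β : 𝔞)
    (v : V) :
    NormedSpace.exp ((t • β : 𝔞) : V →L[ℂ] V) v =
      ∑ k, Real.exp (t * w k β) • e.repr v k • e k := by
  have hexp (k : ι) : NormedSpace.exp ((t • β : 𝔞) : V →L[ℂ] V) (e k) =
      Real.exp (t * w k β) • e k := by
    have htβ : ((t • β : 𝔞) : V →L[ℂ] V) (e k) = ((t * w k β : ℝ) : ℂ) • e k := by
      rw [Submodule.coe_smul, smul_apply, hw, ← Complex.coe_smul, smul_smul, Complex.ofReal_mul]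
    rw [ContinuousLinearMap.exp_apply_of_apply_eq_smul htβ, ← Complex.exp_eq_exp_ℂ,
      ← Complex.ofReal_exp, Complex.coe_smul]
  conv_lhs => rw [← e.sum_repr v]
  simp only [map_sum, map_smul, hexp, smul_comm (e.repr v _)]

theorem tendsto_rescaled_exp_smul_apply [CompleteSpace V] (hw : IsWeightBasis 𝔞 e w) (β : 𝔞)
    (v : V) {m : ℝ} (hm : ∀ k, w k β ≤ m) :
    Tendsto (fun t : ℝ => Real.exp (-(t * m)) • NormedSpace.exp ((t • β : 𝔞) : V →L[ℂ] V) v)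
      atTop (𝓝 (∑ k with w k β = m, e.repr v k • e k)) := by
  have h := tendsto_sum_exp_mul_smul (fun k => sub_nonpos.2 (hm k)) fun k => e.repr v k • e k
  simp only [sub_eq_zero] at h
  refine h.congr fun t => ?_
  rw [exp_smul_apply_eq_sum hw, Finset.smul_sum]
  refine Finset.sum_congr rfl fun k _ => ?_
  rw [smul_smul, ← Real.exp_add, mul_sub, neg_add_eq_sub]

theorem weight_mem_image_mu_of_exposed [FiniteDimensional ℂ V] {M : Set (ℙ ℂ V)} (hMcl : IsClosed M)
    (hfull : Submodule.span ℂ {v : V | ∃ hv : v ≠ 0, mk ℂ v hv ∈ M} = ⊤)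
    (hinv : ∀ (v : V) (hv : v ≠ 0), mk ℂ v hv ∈ M → ∀ β : 𝔞,
      mk ℂ (NormedSpace.exp (β : V →L[ℂ] V) v) (exp_apply_ne_zero (β : V →L[ℂ] V) v hv) ∈ M)
    (hw : IsWeightBasis 𝔞 e w) {j : ι} {β : 𝔞} (hβ : ∀ k, w k ≠ w j → w k β < w j β) :
    ⇑(w j) ∈ mu 𝔞 '' M := by
  have hmax : ∀ k, w k β = w j β → w k = w j := fun k hk =>
    by_contra fun hne => (hβ k hne).ne hk
  obtain ⟨v, ⟨hv, hvM⟩, hvj⟩ :=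
    Submodule.exists_inner_ne_zero_of_span_eq_top hfull (e.orthonormal.ne_zero j)
  let u := ∑ k with w k β = w j β, e.repr v k • e k
  have hu : u ≠ 0 := by
    have : inner ℂ (e j) u = inner ℂ (e j) v := by
      rw [e.orthonormal.inner_right_sum _ (by simp), e.repr_apply_apply]
    exact fun h0 => hvj (by rw [← this, h0, inner_zero_right])
  have hlim := tendsto_rescaled_exp_smul_apply hw β v fun k =>
    (eq_or_ne (w k) (w j)).elim (fun h => h ▸ le_rfl) fun h => (hβ k h).le
  have hc : ∀ t : ℝ, Real.exp (-(t * w j β)) • NormedSpace.exp ((t • β : 𝔞) : V →L[ℂ] V) v ≠ 0 :=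
    fun t => smul_ne_zero (Real.exp_ne_zero _) (exp_apply_ne_zero _ v hv)
  have huM : mk ℂ u hu ∈ M := by
    refine hMcl.mem_of_tendsto (tendsto_mk hc hu hlim) (Eventually.of_forall fun t => ?_)
    have hmk := mk_smul_eq (Complex.ofReal_ne_zero.2 (Real.exp_ne_zero (-(t * w j β))))
      (exp_apply_ne_zero ((t • β : 𝔞) : V →L[ℂ] V) v hv)
    simp only [Complex.coe_smul] at hmk
    exact hmk ▸ hinv v hv hvM (t • β)
  refine ⟨_, huM, mu_mk_of_forall_apply_eq_smul 𝔞 hu fun γ => ?_⟩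
  simp only [u, map_sum, map_smul, hw _, Finset.smul_sum]
  refine Finset.sum_congr rfl fun k hk => ?_
  rw [hmax k (Finset.mem_filter.1 hk).2, smul_comm]

end JointEigenbasis

end stmt10

/-- Let `𝔞` be a real vector space of pairwise commuting self-adjoint
endomorphisms of a finite-dimensional complex inner product space `V`, and let
`μ_𝔞 : ℙ(V) → 𝔞*` be given by `μ_𝔞([v])(β) = Re⟨βv, v⟩/‖v‖²`.  Let `M ⊆ ℙ(V)` be a closed
full subset invariant under `[v] ↦ [exp(β)v]` for every `β ∈ 𝔞`.  If `μ_𝔞(M)` is convex,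
then `μ_𝔞(M) = μ_𝔞(ℙ(V))`. -/
theorem stmt_10 {V : Type*} [NormedAddCommGroup V] [InnerProductSpace ℂ V]
    [FiniteDimensional ℂ V] (𝔞 : Submodule ℝ (V →L[ℂ] V))
    (hsa : ∀ β ∈ 𝔞, IsSelfAdjoint β)
    (hcomm : ∀ β ∈ 𝔞, ∀ γ ∈ 𝔞, Commute β γ)
    (M : Set (ℙ ℂ V)) (hMcl : IsClosed M)
    (hfull : Submodule.span ℂ {v : V | ∃ hv : v ≠ 0, Projectivization.mk ℂ v hv ∈ M} = ⊤)
    (hinv : ∀ (v : V) (hv : v ≠ 0), Projectivization.mk ℂ v hv ∈ M → ∀ β : 𝔞,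
      Projectivization.mk ℂ (NormedSpace.exp (β : V →L[ℂ] V) v)
        (stmt10.exp_apply_ne_zero (β : V →L[ℂ] V) v hv) ∈ M)
    (hconv : Convex ℝ (stmt10.mu 𝔞 '' M)) :
    stmt10.mu 𝔞 '' M = Set.range (stmt10.mu 𝔞) := by
  obtain ⟨e, w, hw⟩ := stmt10.exists_isWeightBasis 𝔞 hsa hcomm
  refine (Set.image_subset_range _ _).antisymm ?_
  rw [stmt10.range_mu_eq_image_convexHull hw]
  rintro _ ⟨x, hx, rfl⟩
  refine Module.Dual.convexHull_subset_of_forall_exposed (Set.finite_range w)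
    (hconv.linear_preimage (LinearMap.ltoFun ℝ 𝔞 ℝ ℝ)) ?_ hx
  rintro _ ⟨j, rfl⟩ β hβ
  exact stmt10.weight_mem_image_mu_of_exposed hMcl hfull hinv hw fun k hk => hβ _ ⟨k, rfl⟩ hk
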